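/- Fix parameters π, Σ, r, b. Define the partial function f_univ on disks of radius r of graphs labeled over Σ × Γ_{π,Σ,r,b} by f_univ(X[⟨f⟩]_u^r) = f(X_u^r)[⟨f⟩] for every X ∈ X_{π,Σ}, every f ∈ F_{π,Σ,r,b}, and every vertex u of X, where X[⟨f⟩] denotes X with the description ⟨f⟩ adjoined to every vertex label. Then f_univ is a local rule (it satisfies the naming, boundedness, and both consistency conditions defining local rules). -/

import Mathlib

/-!  Generalized Cayley graphs (Arrighi–Martiel–Nesme, "Intrinsic universality of
causal graph dynamics").

A word over the alphabet `Π = π × π` describes a path in a port graph: the letter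
`(a, b)` means "leave the current vertex through port `a` and enter the next vertex
through port `b`".  -/

/-- A word (path description) over the alphabet `π × π`. -/
abbrev Word (π : Type) := List (π × π)

/-- A labeled generalized Cayley graph over the port set `π` with vertex labels in `Λ`:
a language `L ⊆ (π × π)*` together with an equivalence relation `rel` on `L`
satisfying prefix-closure, `rel`-congruence, invertibility of edges and port
determinism, and a labeling of the `rel`-classes (encoded as a partial function
`label` on words, defined exactly on `L` and constant on `rel`-classes).
The pointed vertex is the class of the empty word `[]`. -/
structure GCGraph (π : Type) (Λ : Type) where
  /-- the language of paths -/
  L : Set (Word π)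
  /-- the equivalence relation `≡_L` (two paths are related iff they lead to the
  same vertex); it only relates members of `L`. -/
  rel : Word π → Word π → Prop
  /-- the labeling: `label u` is the label of the vertex reached by `u` (it is
  `some _` exactly on `L`). -/
  label : Word π → Option Λ
  eps_mem : ([] : Word π) ∈ L
  rel_refl : ∀ u ∈ L, rel u u
  rel_symm : ∀ {u v}, rel u v → rel v u
  rel_trans : ∀ {u v w}, rel u v → rel v w → rel u w
  rel_mem : ∀ {u v}, rel u v → u ∈ L
  /-- axiom (1): prefix closure. -/
  prefix_closed : ∀ u v : Word π, u ++ v ∈ L → u ∈ L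
  /-- axiom (2): congruence of the equivalence relation. -/
  rel_congr : ∀ u u' v : Word π, rel u u' → u ++ v ∈ L →
      u' ++ v ∈ L ∧ rel (u' ++ v) (u ++ v)
  /-- axiom (3): every edge can be traversed backwards. -/
  edge_inv : ∀ (u : Word π) (a b : π), u ++ [(a, b)] ∈ L →
      u ++ [(a, b), (b, a)] ∈ L ∧ rel (u ++ [(a, b), (b, a)]) u
  /-- axiom (4): port determinism — a vertex cannot be connected to two different
  vertices using the same port. -/
  port_det : ∀ (u u' : Word π) (a b c : π), rel u u' →
      u ++ [(a, b)] ∈ L → u' ++ [(a, c)] ∈ L → b = c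
  label_isSome : ∀ u, (label u).isSome ↔ u ∈ L
  label_congr : ∀ {u v}, rel u v → label u = label v

/-- The raw data of a disk: a language, a relation and a labeling
(the restriction of a generalized Cayley graph to words of bounded length). -/
structure DiskData (π Λ : Type) where
  L : Set (Word π)
  rel : Word π → Word π → Prop
  label : Word π → Option Λ

/-- The disk `X^r` of radius `r` of a generalized Cayley graph: the restriction of
`X` to the words of `L` of length at most `r` (keeping labels). -/
def GCGraph.disk {π Λ : Type} (X : GCGraph π Λ) (r : ℕ) : DiskData π Λ where
  L := {u | u ∈ X.L ∧ u.length ≤ r}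
  rel := fun u v => X.rel u v ∧ u.length ≤ r ∧ v.length ≤ r
  label := fun u => if u.length ≤ r then X.label u else none

/-- The Gromov–Hausdorff–Cantor metric on generalized Cayley graphs:
`d(X, Y) = 0` if `X = Y`, and `d(X, Y) = (1/2)^r` otherwise, where `r` is the
minimal radius such that `X^r ≠ Y^r`. -/
noncomputable def GHCdist {π Λ : Type} (X Y : GCGraph π Λ) : ℝ :=
  letI := Classical.propDecidable (X = Y)
  if X = Y then 0 else (1 / 2 : ℝ) ^ sInf {r : ℕ | X.disk r ≠ Y.disk r}

/-! Labeled graphs `G_{π,Σ}` with ports, consistency, and local rules. -/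

/-- The raw data of a labeled port graph in `G_{π,Σ}`: a set of vertices (with
names in `VN`), a set of edges — unordered pairs of vertex-port pairs — and a
labeling of the vertices, encoded as the set of pairs `(vertex, label)`. -/
structure PreGraph (VN π Λ : Type) where
  V : Set VN
  E : Set (Sym2 (VN × π))
  lab : Set (VN × Λ)

/-- `G` is a well-formed labeled graph of `G_{π,Σ}`: edges are two-element subsets
of `V(G) : π`, every vertex-port pair `u : i` appears in at most one edge, and
every vertex carries exactly one label. -/
def IsGraph {VN π Λ : Type} (G : PreGraph VN π Λ) : Prop :=
  (∀ e ∈ G.E, ¬ e.IsDiag) ∧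
  (∀ e ∈ G.E, ∀ x ∈ e, (x : VN × π).1 ∈ G.V) ∧
  (∀ x : VN × π, ∀ e₁ ∈ G.E, ∀ e₂ ∈ G.E, x ∈ e₁ → x ∈ e₂ → e₁ = e₂) ∧
  (∀ v ∈ G.V, ∃! a : Λ, (v, a) ∈ G.lab) ∧
  (∀ p ∈ G.lab, (p : VN × Λ).1 ∈ G.V)

/-- Two labeled graphs are consistent iff they agree on their intersection: they
agree on the edges attached to shared vertex-port pairs, and on the labels of
shared vertices. -/
def Consistent {VN π Λ : Type} (G H : PreGraph VN π Λ) : Prop :=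
  (∀ (u v w : VN) (k l p : π),
      s((u, k), (v, l)) ∈ G.E → s((u, k), (w, p)) ∈ H.E → v = w ∧ l = p) ∧
  (∀ (v : VN) (a b : Λ), (v, a) ∈ G.lab → (v, b) ∈ H.lab → a = b)

/-- Non-trivial consistency: consistency together with a non-empty intersection of
the vertex sets. -/
def NonTrivConsistent {VN π Λ : Type} (G H : PreGraph VN π Λ) : Prop :=
  Consistent G H ∧ (G.V ∩ H.V).Nonempty

/-- The union of two labeled graphs: union of the vertex sets, of the edge sets and
of the labelings. -/
def PreGraph.union {VN π Λ : Type} (G H : PreGraph VN π Λ) : PreGraph VN π Λ where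
  V := G.V ∪ H.V
  E := G.E ∪ H.E
  lab := G.lab ∪ H.lab

/-- `Y` is the shift of the generalized Cayley graph `X` along the path `u`
(the pointer of `X` is moved along `u`): its language is
`{v | u.v ∈ L}`, two paths are related iff their `u`-prefixed versions are, and
labels are inherited. -/
def IsShift {π Λ : Type} (X : GCGraph π Λ) (u : Word π) (Y : GCGraph π Λ) : Prop :=
  Y.L = {v : Word π | u ++ v ∈ X.L} ∧
  (∀ v v' : Word π, Y.rel v v' ↔ X.rel (u ++ v) (u ++ v')) ∧
  (∀ v : Word π, Y.label v = X.label (u ++ v))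

/-! Local rules.  The images of a local rule are graphs whose vertex names are
(disjoint) subsets of `V(X).S`: sets of pairs (path of `X`, suffix in
`S = {ε, 1, …, s}`), the suffix `ε` being represented by `0 : Fin (s+1)`. -/

/-- Vertex names used by local rules: subsets of `V(X).S`, i.e. sets of
(path, suffix) pairs. -/
abbrev VName (π : Type) (s : ℕ) := Set (Word π × Fin (s + 1))

/-- Prefixing a vertex name by a word `u`: every path occurring in the name is
prefixed by `u`. -/
def prefixName {π : Type} {s : ℕ} (u : Word π) (N : VName π s) : VName π s :=
  (fun p => (u ++ p.1, p.2)) '' N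

/-- `u.G`: the graph `G` with all vertex names prefixed by the word `u`. -/
def PreGraph.prefixG {π Λ : Type} {s : ℕ} (u : Word π)
    (G : PreGraph (VName π s) π Λ) : PreGraph (VName π s) π Λ where
  V := prefixName u '' G.V
  E := Sym2.map (fun x => (prefixName u x.1, x.2)) '' G.E
  lab := (fun q => (prefixName u q.1, q.2)) '' G.lab

/-- `f` is a (possibly partial, with domain `D`) local rule of parameters
`(|π|, Σ, r, b)` from disks of radius `r` to `G_{π,Σ}`:

* it only depends on the disk of radius `r` of its argument (it is a function of
  the disk `X^r`);
* its images are well-formed graphs;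
* the vertices of `f(X)` are pairwise disjoint subsets of `V(X^r).S`
  (sets of (path, suffix) pairs, closed under the vertex-equivalence of the disk)
  and the vertex named `ε` belongs to `f(X)`;
* images have at most `b` vertices;
* for a vertex `u ∈ X^0`, `f(X)` and `u.f(X_u)` are non-trivially consistent;
* for a vertex `u ∈ X^{2r+1}`, `f(X)` and `u.f(X_u)` are consistent. -/
structure IsLocalRule {π Λ : Type} {s : ℕ} (D : Set (GCGraph π Λ)) (r b : ℕ)
    (f : GCGraph π Λ → PreGraph (VName π s) π Λ) : Prop where
  localr : ∀ X ∈ D, ∀ Y ∈ D, X.disk r = Y.disk r → f X = f Y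
  graph : ∀ X ∈ D, IsGraph (f X)
  names_sub : ∀ X ∈ D, ∀ N ∈ (f X).V, ∀ p ∈ N,
      (p : Word π × Fin (s + 1)).1 ∈ X.L ∧ p.1.length ≤ r
  names_closed : ∀ X ∈ D, ∀ N ∈ (f X).V, ∀ p ∈ N, ∀ q : Word π,
      X.rel (p : Word π × Fin (s + 1)).1 q → q.length ≤ r → (q, p.2) ∈ N
  names_disj : ∀ X ∈ D, ∀ N ∈ (f X).V, ∀ M ∈ (f X).V, N ≠ M → N ∩ M = ∅
  eps_vertex : ∀ X ∈ D, ∃ N ∈ (f X).V, (([] : Word π), (0 : Fin (s + 1))) ∈ N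
  bounded : ∀ X ∈ D, (f X).V.Finite ∧ (f X).V.ncard ≤ b
  consist_near : ∀ X ∈ D, ∀ u ∈ X.L, u.length ≤ 0 → ∀ Y, IsShift X u Y → Y ∈ D →
      NonTrivConsistent (f X) ((f Y).prefixG u)
  consist_far : ∀ X ∈ D, ∀ u ∈ X.L, u.length ≤ 2 * r + 1 → ∀ Y, IsShift X u Y → Y ∈ D →
      Consistent (f X) ((f Y).prefixG u)

/-- Adjoining a description `γ` to every vertex label of a labeled graph. -/
def adjoinPre {VN π Λ Γ : Type} (γ : Γ) (G : PreGraph VN π Λ) :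
    PreGraph VN π (Λ × Γ) where
  V := G.V
  E := G.E
  lab := (fun q => (q.1, (q.2, γ))) '' G.lab

/-- `Y = X[γ]`: the generalized Cayley graph `X` with the description `γ`
adjoined to every vertex label. -/
def IsAdjoin {π Λ Γ : Type} (X : GCGraph π Λ) (γ : Γ) (Y : GCGraph π (Λ × Γ)) :
    Prop :=
  Y.L = X.L ∧ (∀ u v : Word π, Y.rel u v ↔ X.rel u v) ∧
  (∀ u : Word π, Y.label u = (X.label u).map (fun a => (a, γ)))


/-! The description `⟨f⟩` can be read off the label of the pointed vertex of `X[⟨f⟩]`, and it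
determines `f` because `desc` is injective on local rules; forgetting it recovers `X`. Disks and
shifts commute with adjoining a constant label component, so each defining condition of a local
rule for `f_univ` at `X[⟨f⟩]` is the corresponding condition for `f` at `X`, with `⟨f⟩` adjoined
to all labels. -/

attribute [ext] GCGraph DiskData PreGraph

section

variable {π Λ Γ : Type}

lemma GCGraph.label_eq_of_disk_eq {X Y : GCGraph π Λ} {r : ℕ} (h : X.disk r = Y.disk r)
    {u : Word π} (hu : u.length ≤ r) : X.label u = Y.label u := by
  simpa [GCGraph.disk, hu] using congrFun (congrArg DiskData.label h) u

def DiskData.mapLabel {Λ' : Type} (g : Λ → Λ') (D : DiskData π Λ) : DiskData π Λ' where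
  L := D.L
  rel := D.rel
  label := Option.map g ∘ D.label

namespace IsAdjoin

variable {X X' : GCGraph π Λ} {γ γ' : Γ} {Y Y' : GCGraph π (Λ × Γ)}

lemma label_map_fst (adj : IsAdjoin X γ Y) (u : Word π) :
    (Y.label u).map Prod.fst = X.label u := by
  simp [adj.2.2 u, Option.map_map, Function.comp_def]

lemma label_map_snd (adj : IsAdjoin X γ Y) {u : Word π} (hu : u ∈ X.L) :
    (Y.label u).map Prod.snd = some γ := by
  obtain ⟨a, ha⟩ := Option.isSome_iff_exists.mp ((X.label_isSome u).mpr hu)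
  simp [adj.2.2 u, ha]

lemma desc_eq_of_label_eq (adj : IsAdjoin X γ Y) (adj' : IsAdjoin X' γ' Y') {u v : Word π}
    (hu : u ∈ X.L) (hv : v ∈ X'.L) (h : Y.label u = Y'.label v) : γ = γ' :=
  Option.some.inj <| (adj.label_map_snd hu).symm.trans (h ▸ adj'.label_map_snd hv)

lemma base_unique (adj : IsAdjoin X γ Y) (adj' : IsAdjoin X' γ' Y) : X = X' := by
  ext u
  · rw [← adj.1, adj'.1]
  · rw [← adj.2.1, adj'.2.1]
  · rw [← adj.label_map_fst, adj'.label_map_fst]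

lemma disk_eq_mapLabel (adj : IsAdjoin X γ Y) (r : ℕ) :
    X.disk r = (Y.disk r).mapLabel Prod.fst := by
  ext u
  · simp [GCGraph.disk, DiskData.mapLabel, adj.1]
  · simp [GCGraph.disk, DiskData.mapLabel, adj.2.1]
  · by_cases hu : u.length ≤ r <;> simp [GCGraph.disk, DiskData.mapLabel, hu, adj.label_map_fst]

lemma disk_eq (adj : IsAdjoin X γ Y) (adj' : IsAdjoin X' γ' Y') {r : ℕ}
    (hd : Y.disk r = Y'.disk r) : X.disk r = X'.disk r := by
  rw [adj.disk_eq_mapLabel, adj'.disk_eq_mapLabel, hd]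

lemma isShift (adj : IsAdjoin X γ Y) (adj' : IsAdjoin X' γ' Y') {u : Word π}
    (hsh : IsShift Y u Y') : IsShift X u X' :=
  ⟨by rw [← adj'.1, hsh.1, adj.1],
    fun v v' => by rw [← adj'.2.1, hsh.2.1, adj.2.1],
    fun v => by rw [← adj'.label_map_fst, hsh.2.2, adj.label_map_fst]⟩

lemma desc_eq_of_isShift (adj : IsAdjoin X γ Y) (adj' : IsAdjoin X' γ' Y') {u : Word π}
    (hu : u ∈ Y.L) (hsh : IsShift Y u Y') : γ' = γ :=
  adj'.desc_eq_of_label_eq adj X'.eps_mem (adj.1 ▸ hu) (by rw [hsh.2.2, List.append_nil])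

end IsAdjoin

section adjoinPre

variable {VN : Type} {G H : PreGraph VN π Λ} (γ : Γ)

lemma isGraph_adjoinPre (hG : IsGraph G) : IsGraph (adjoinPre γ G) := by
  obtain ⟨hdiag, hends, hport, hlab, hlabV⟩ := hG
  refine ⟨hdiag, hends, hport, fun v hv => ?_, ?_⟩
  · obtain ⟨a, ha, huniq⟩ := hlab v hv
    refine ⟨(a, γ), ⟨(v, a), ha, rfl⟩, ?_⟩
    rintro _ ⟨⟨_, a'⟩, ha', ⟨⟩⟩
    rw [huniq a' ha']
  · rintro _ ⟨q, hq, rfl⟩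
    exact hlabV q hq

lemma consistent_adjoinPre (h : Consistent G H) :
    Consistent (adjoinPre γ G) (adjoinPre γ H) := by
  refine ⟨h.1, ?_⟩
  rintro _ _ _ ⟨⟨v, a⟩, ha, ⟨⟩⟩ ⟨⟨_, b⟩, hb, ⟨⟩⟩
  rw [h.2 v a b ha hb]

lemma nonTrivConsistent_adjoinPre (h : NonTrivConsistent G H) :
    NonTrivConsistent (adjoinPre γ G) (adjoinPre γ H) :=
  ⟨consistent_adjoinPre γ h.1, h.2⟩

lemma adjoinPre_prefixG {s : ℕ} (u : Word π) (G : PreGraph (VName π s) π Λ) :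
    (adjoinPre γ G).prefixG u = adjoinPre γ (G.prefixG u) := by
  ext : 1 <;> simp only [PreGraph.prefixG, adjoinPre, Set.image_image]

end adjoinPre

section funiv

variable {s : ℕ} (desc : (GCGraph π Λ → PreGraph (VName π s) π Λ) → Γ) (r b : ℕ)

def funivDomain : Set (GCGraph π (Λ × Γ)) :=
  {Y | ∃ f, IsLocalRule Set.univ r b f ∧ ∃ X, IsAdjoin X (desc f) Y}

open Classical in
noncomputable def funiv (Y : GCGraph π (Λ × Γ)) : PreGraph (VName π s) π (Λ × Γ) :=
  if h : Y ∈ funivDomain desc r b then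
    adjoinPre (desc h.choose) (h.choose h.choose_spec.2.choose)
  else ⟨∅, ∅, ∅⟩

variable {desc r b}

lemma funiv_eq (hdesc : Set.InjOn desc {f | IsLocalRule Set.univ r b f})
    {f : GCGraph π Λ → PreGraph (VName π s) π Λ} (hf : IsLocalRule Set.univ r b f)
    {X : GCGraph π Λ} {Y : GCGraph π (Λ × Γ)} (adj : IsAdjoin X (desc f) Y) :
    funiv desc r b Y = adjoinPre (desc f) (f X) := by
  have h : Y ∈ funivDomain desc r b := ⟨f, hf, X, adj⟩
  have hg := h.choose_spec.1
  have adj' := h.choose_spec.2.choose_spec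
  have hgf : h.choose = f :=
    hdesc hg hf (adj'.desc_eq_of_label_eq adj (GCGraph.eps_mem _) X.eps_mem rfl)
  rw [funiv, dif_pos h, adj'.base_unique adj, hgf]

lemma isLocalRule_funiv (hdesc : Set.InjOn desc {f | IsLocalRule Set.univ r b f}) :
    IsLocalRule (funivDomain desc r b) r b (funiv desc r b) where
  localr := by
    rintro Y ⟨f, hf, X, adj⟩ Y' ⟨f', hf', X', adj'⟩ hd
    obtain rfl := hdesc hf' hf <| adj'.desc_eq_of_label_eq adj X'.eps_mem X.eps_mem
      (GCGraph.label_eq_of_disk_eq hd (u := []) (Nat.zero_le r)).symm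
    rw [funiv_eq hdesc hf adj, funiv_eq hdesc hf adj',
      hf.localr X trivial X' trivial (adj.disk_eq adj' hd)]
  graph := by
    rintro Y ⟨f, hf, X, adj⟩
    rw [funiv_eq hdesc hf adj]
    exact isGraph_adjoinPre _ (hf.graph X trivial)
  names_sub := by
    rintro Y ⟨f, hf, X, adj⟩ N hN
    rw [funiv_eq hdesc hf adj] at hN
    rw [adj.1]
    exact hf.names_sub X trivial N hN
  names_closed := by
    rintro Y ⟨f, hf, X, adj⟩ N hN p hp q hq
    rw [funiv_eq hdesc hf adj] at hN
    exact hf.names_closed X trivial N hN p hp q ((adj.2.1 _ _).mp hq)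
  names_disj := by
    rintro Y ⟨f, hf, X, adj⟩
    rw [funiv_eq hdesc hf adj]
    exact hf.names_disj X trivial
  eps_vertex := by
    rintro Y ⟨f, hf, X, adj⟩
    rw [funiv_eq hdesc hf adj]
    exact hf.eps_vertex X trivial
  bounded := by
    rintro Y ⟨f, hf, X, adj⟩
    rw [funiv_eq hdesc hf adj]
    exact hf.bounded X trivial
  consist_near := by
    rintro Y ⟨f, hf, X, adj⟩ u hu hlen Y' hsh ⟨f', hf', X', adj'⟩
    obtain rfl := hdesc hf' hf (adj.desc_eq_of_isShift adj' hu hsh)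
    rw [funiv_eq hdesc hf adj, funiv_eq hdesc hf adj', adjoinPre_prefixG]
    exact nonTrivConsistent_adjoinPre _
      (hf.consist_near X trivial u (adj.1 ▸ hu) hlen X' (adj.isShift adj' hsh) trivial)
  consist_far := by
    rintro Y ⟨f, hf, X, adj⟩ u hu hlen Y' hsh ⟨f', hf', X', adj'⟩
    obtain rfl := hdesc hf' hf (adj.desc_eq_of_isShift adj' hu hsh)
    rw [funiv_eq hdesc hf adj, funiv_eq hdesc hf adj', adjoinPre_prefixG]
    exact consistent_adjoinPre _
      (hf.consist_far X trivial u (adj.1 ▸ hu) hlen X' (adj.isShift adj' hsh) trivial)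

end funiv

end

theorem funiv_isLocalRule_general {d s : ℕ} {Λ Γ : Type} (r b : ℕ)
    (desc : (GCGraph (Fin d) Λ → PreGraph (VName (Fin d) s) (Fin d) Λ) → Γ)
    (hdesc : Set.InjOn desc {f | IsLocalRule Set.univ r b f}) :
    ∃ fu : GCGraph (Fin d) (Λ × Γ) → PreGraph (VName (Fin d) s) (Fin d) (Λ × Γ),
      (∀ f, IsLocalRule Set.univ r b f →
        ∀ (X : GCGraph (Fin d) Λ) (Y : GCGraph (Fin d) (Λ × Γ)),
          IsAdjoin X (desc f) Y → fu Y = adjoinPre (desc f) (f X)) ∧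
      IsLocalRule {Y : GCGraph (Fin d) (Λ × Γ) |
          ∃ f, IsLocalRule Set.univ r b f ∧ ∃ X, IsAdjoin X (desc f) Y} r b fu :=
  ⟨funiv desc r b, fun _ hf _ _ adj => funiv_eq hdesc hf adj, isLocalRule_funiv hdesc⟩

/-- Fix parameters `π, Σ, r, b` and a finite set `Γ_{π,Σ,r,b}` of descriptions
(an injection `desc` of the — finite — set of local rules `F_{π,Σ,r,b}` into `Γ`).
The partial function `f_univ`, defined on disks of graphs labeled over
`Σ × Γ_{π,Σ,r,b}` of the form `X[⟨f⟩]` by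
`f_univ(X[⟨f⟩]_u^r) = f(X_u^r)[⟨f⟩]`,
is a local rule (it satisfies the naming, boundedness and both consistency
conditions defining local rules). -/
theorem funiv_isLocalRule {d s : ℕ} {Λ Γ : Type} [Fintype Λ] [Fintype Γ] (r b : ℕ)
    (desc : (GCGraph (Fin d) Λ → PreGraph (VName (Fin d) s) (Fin d) Λ) → Γ)
    (hdesc : Set.InjOn desc {f | IsLocalRule Set.univ r b f}) :
    ∃ fu : GCGraph (Fin d) (Λ × Γ) → PreGraph (VName (Fin d) s) (Fin d) (Λ × Γ),
      (∀ f, IsLocalRule Set.univ r b f →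
        ∀ (X : GCGraph (Fin d) Λ) (Y : GCGraph (Fin d) (Λ × Γ)),
          IsAdjoin X (desc f) Y → fu Y = adjoinPre (desc f) (f X)) ∧
      IsLocalRule {Y : GCGraph (Fin d) (Λ × Γ) |
          ∃ f, IsLocalRule Set.univ r b f ∧ ∃ X, IsAdjoin X (desc f) Y} r b fu :=
  funiv_isLocalRule_general r b desc hdesc
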